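/- arXiv:1511.01193 — 6 statements merged into one kernel-verified Lean document; each statement's English description precedes it below -/
import Mathlib

section
/- Let A be an N×N matrix with integer entries. Define the (N+1)×(N+1) matrix A° as follows: row i of A° for i ≤ N-1 is (A(i,1),...,A(i,N),0), row N of A° is (0,...,0,0,1), and row N+1 is (A(N,1),...,A(N,N),0). Then det(1 - A°) = det(1 - A). -/
/-- Parry–Sullivan expansion at vertex `N = n+1` of an `N × N` matrix `A`:
first `N-1` rows are those of `A` with a `0` appended in column `N+1`,
row `N` is the standard basis vector `e_{N+1}`, and
row `N+1` is row `N` of `A` with a `0` appended. -/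
def psExpansion {n : ℕ} (A : Matrix (Fin (n+1)) (Fin (n+1)) ℤ) :
    Matrix (Fin (n+2)) (Fin (n+2)) ℤ :=
  Matrix.of fun i j =>
    if hi : (i : ℕ) < n then
      if hj : (j : ℕ) < n + 1 then A ⟨i, Nat.lt_succ_of_lt hi⟩ ⟨j, hj⟩ else 0
    else if (i : ℕ) = n then
      if (j : ℕ) = n + 1 then 1 else 0
    else
      if hj : (j : ℕ) < n + 1 then A ⟨n, Nat.lt_succ_self n⟩ ⟨j, hj⟩ else 0

/-- `det(1 - A°) = det(1 - A)`: the Parry–Sullivan expansion preserves `det(1 - A)`. -/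
theorem det_one_sub_psExpansion {n : ℕ} (A : Matrix (Fin (n+1)) (Fin (n+1)) ℤ) :
    ((1 : Matrix (Fin (n+2)) (Fin (n+2)) ℤ) - psExpansion A).det
      = ((1 : Matrix (Fin (n+1)) (Fin (n+1)) ℤ) - A).det := by
  set B : Matrix (Fin (n+2)) (Fin (n+2)) ℤ := 1 - psExpansion A with hB
  set i₀ : Fin (n+2) := ⟨n, by omega⟩ with hi₀
  set i₁ : Fin (n+2) := ⟨n+1, by omega⟩ with hi₁
  have hne : i₀ ≠ i₁ := by simp [hi₀, hi₁, Fin.ext_iff]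
  set C := B.updateRow i₀ (B i₀ + B i₁) with hC
  have h1 : B.det = C.det := (Matrix.det_updateRow_add_self B hne).symm
  -- entries of C
  have hClast : ∀ i : Fin (n+2), C i (Fin.last (n+1)) = if i = Fin.last (n+1) then 1 else 0 := by
    intro i
    have hlast : ((Fin.last (n+1) : Fin (n+2)) : ℕ) = n+1 := rfl
    by_cases h : i = i₀
    · subst h
      have : i₀ ≠ Fin.last (n+1) := by simp [hi₀, Fin.ext_iff]
      simp only [hC, Matrix.updateRow_self, Pi.add_apply, hB, Matrix.sub_apply]
      rw [if_neg this]
      simp [psExpansion, hi₀, hi₁, Matrix.one_apply, Fin.ext_iff]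
    · rw [hC, Matrix.updateRow_ne h, hB]
      simp only [Matrix.sub_apply]
      rcases lt_or_ge ((i : ℕ)) n with hi | hi
      · have h1 : i ≠ Fin.last (n+1) := by simp [Fin.ext_iff]; omega
        simp [psExpansion, hi, Matrix.one_apply, h1, Fin.ext_iff]
      · have hin : (i : ℕ) ≠ n := by simp [hi₀, Fin.ext_iff] at h; omega
        have hi1 : (i : ℕ) = n+1 := by omega
        have h1 : i = Fin.last (n+1) := by simp [Fin.ext_iff]; omega
        simp [psExpansion, h1, hi1, Matrix.one_apply, psExpansion]
  rw [h1, Matrix.det_succ_column C (Fin.last (n+1))]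
  rw [Finset.sum_eq_single (Fin.last (n+1))]
  · rw [hClast, if_pos rfl]
    have hpow : (-1 : ℤ) ^ (((Fin.last (n+1) : Fin (n+2)) : ℕ) + ((Fin.last (n+1) : Fin (n+2)) : ℕ)) = 1 := by
      rw [← two_mul, pow_mul]; norm_num
    rw [hpow, one_mul, one_mul]
    congr 1
    rw [Fin.succAbove_last]
    ext i j
    simp only [Matrix.submatrix_apply]
    by_cases h : (i : ℕ) = n
    · have hic : i.castSucc = i₀ := by simp [hi₀, Fin.ext_iff, h]
      rw [hC, hic, Matrix.updateRow_self]
      have hjn : (j : ℕ) < n + 1 := j.isLt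
      have hj' : ((j.castSucc : Fin (n+2)) : ℕ) = (j : ℕ) := rfl
      have h0 : ¬ ((i₀ : ℕ) < n) := by simp [hi₀]
      have h1 : ¬ ((i₁ : ℕ) < n) := by simp [hi₁]
      have h2 : (i₁ : ℕ) ≠ n := by simp [hi₁]
      simp only [Pi.add_apply, hB, Matrix.sub_apply, psExpansion, Matrix.of_apply]
      rw [dif_neg h0, if_pos (by simp [hi₀]), dif_neg h1, if_neg h2, dif_pos (show ((j.castSucc : Fin (n+2)) : ℕ) < n+1 from j.isLt)]
      have hA : A ⟨n, Nat.lt_succ_self n⟩ ⟨(j.castSucc : Fin (n+2)), j.isLt⟩ = A i j := by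
        congr 1 <;> simp [Fin.ext_iff, h]
      rw [hA]
      have hone : (1 : Matrix (Fin (n+2)) (Fin (n+2)) ℤ) i₀ j.castSucc + (1 : Matrix (Fin (n+2)) (Fin (n+2)) ℤ) i₁ j.castSucc = (1 : Matrix (Fin (n+1)) (Fin (n+1)) ℤ) i j := by
        have e1 : i₁ ≠ j.castSucc := by
          simp only [hi₁, Fin.ext_iff, hj']; omega
        have e2 : (i₀ = j.castSucc) ↔ (i = j) := by
          simp only [hi₀, Fin.ext_iff, hj', h]
        rw [Matrix.one_apply, Matrix.one_apply, Matrix.one_apply, if_neg e1, add_zero]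
        by_cases hij : i = j
        · rw [if_pos (e2.mpr hij), if_pos hij]
        · rw [if_neg (fun c => hij (e2.mp c)), if_neg hij]
      rw [if_neg (show ¬ (((j.castSucc : Fin (n+2)) : ℕ) = n+1) by omega)]
      push_cast
      rw [← hone]
      ring
    · have hic : i.castSucc ≠ i₀ := by simp [hi₀, Fin.ext_iff, h]
      have hiltn : (i : ℕ) < n := by have := i.isLt; omega
      rw [hC, Matrix.updateRow_ne hic, hB]
      simp only [Matrix.sub_apply, psExpansion, Matrix.of_apply]
      rw [dif_pos (show ((i.castSucc : Fin (n+2)) : ℕ) < n from hiltn),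
        dif_pos (show ((j.castSucc : Fin (n+2)) : ℕ) < n+1 from j.isLt)]
      have hA : A ⟨(i.castSucc : Fin (n+2)), Nat.lt_succ_of_lt hiltn⟩ ⟨(j.castSucc : Fin (n+2)), j.isLt⟩ = A i j := by
        congr 1 <;> simp [Fin.ext_iff]
      rw [hA]
      congr 1
      simp [Matrix.one_apply, Fin.ext_iff]
  · intro b _ hb
    rw [hClast, if_neg hb]; ring
  · intro h; simp at h
end

section
/- Let A be an N×N matrix with integer entries and let A_- be the (N+2)×(N+2) Cuntz splice matrix obtained from A. Then det(1 - A_-) = -det(1 - A). -/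
/-- Cuntz splice of an `M × M` matrix `B` (`M = m+1`): the `(M+2) × (M+2)` matrix whose
upper-left `M × M` block is `B`, with (1-based) entries
`B₋(M,M+1) = B₋(M+1,M) = B₋(M+1,M+1) = B₋(M+1,M+2) = B₋(M+2,M+1) = B₋(M+2,M+2) = 1`
and all other new entries `0`. -/
def cuntzSplice {m : ℕ} (B : Matrix (Fin (m+1)) (Fin (m+1)) ℤ) :
    Matrix (Fin (m+3)) (Fin (m+3)) ℤ :=
  Matrix.of fun i j =>
    if hi : (i : ℕ) < m + 1 then
      if hj : (j : ℕ) < m + 1 then B ⟨i, hi⟩ ⟨j, hj⟩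
      else if (i : ℕ) = m ∧ (j : ℕ) = m + 1 then 1 else 0
    else
      if (i : ℕ) = m + 1 then
        if (j : ℕ) = m ∨ (j : ℕ) = m + 1 ∨ (j : ℕ) = m + 2 then 1 else 0
      else
        if (j : ℕ) = m + 1 ∨ (j : ℕ) = m + 2 then 1 else 0

/-!
Moving the two new indices into a trailing `Fin 2` block writes `1 - A₋` as a block matrix with
corner `1 - A`, bottom-right block `D = [[0, -1], [-1, 0]]`, and rank-one off-diagonal blocks
supported on the last row and column of `1 - A`. These meet `D⁻¹ = D` only through its entry
`D⁻¹(0, 0) = 0`, so the Schur complement of `D` is `1 - A` itself, and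
`det (1 - A₋) = det D * det (1 - A) = -det (1 - A)`.
-/

open Matrix

theorem det_fromBlocks_single_single {R m o : Type*} [CommRing R] [Fintype m] [DecidableEq m]
    [Fintype o] [DecidableEq o] (M : Matrix m m R) (D : Matrix o o R) [Invertible D]
    (i j : m) (k k' : o) (b c : R) (h : (⅟D) k k' = 0) :
    (fromBlocks M (single i k b) (single k' j c) D).det = D.det * M.det := by
  rw [det_fromBlocks₂₂, single_mul_mul_single, h, mul_zero, zero_mul, single_zero, sub_zero]

instance invertibleAntidiagNegOne {R : Type*} [Ring R] :
    Invertible (!![0, -1; -1, 0] : Matrix (Fin 2) (Fin 2) R) :=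
  ⟨!![0, -1; -1, 0], by simp [one_fin_two], by simp [one_fin_two]⟩

theorem one_sub_cuntzSplice_submatrix_finSumFinEquiv {n : ℕ}
    (A : Matrix (Fin (n+1)) (Fin (n+1)) ℤ) :
    (1 - cuntzSplice A).submatrix (finSumFinEquiv (m := n + 1) (n := 2))
        (finSumFinEquiv (m := n + 1) (n := 2))
      = fromBlocks (1 - A) (single (Fin.last n) 0 (-1)) (single 0 (Fin.last n) (-1))
          !![0, -1; -1, 0] := by
  ext (i | i) (j | j)
  · simp [cuntzSplice, Fin.is_le, one_apply, Fin.ext_iff]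
  · fin_cases j <;> simp [cuntzSplice, one_apply, single_apply, Fin.ext_iff] <;> omega
  · fin_cases i <;> simp [cuntzSplice, one_apply, single_apply, Fin.ext_iff] <;> omega
  · fin_cases i <;> fin_cases j <;> simp [cuntzSplice, one_apply]

/-- `det(1 - A₋) = -det(1 - A)`: the Cuntz splice flips the sign of `det(1 - A)`. -/
theorem det_one_sub_cuntzSplice {n : ℕ} (A : Matrix (Fin (n+1)) (Fin (n+1)) ℤ) :
    ((1 : Matrix (Fin (n+3)) (Fin (n+3)) ℤ) - cuntzSplice A).det
      = -((1 : Matrix (Fin (n+1)) (Fin (n+1)) ℤ) - A).det := by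
  rw [← det_submatrix_equiv_self (finSumFinEquiv (m := n + 1) (n := 2)),
    one_sub_cuntzSplice_submatrix_finSumFinEquiv,
    det_fromBlocks_single_single _ _ _ _ _ _ _ _ rfl, det_fin_two_of]
  ring
end

section
/- Let A be an N×N integer matrix and A_- its Cuntz splice. The map ξ_A : Z^N → Z^{N+2}, ξ_A(x) = (x,0,0), induces an injective group homomorphism from G(A) = Z^N/(1-A^t)Z^N to G(A_-) = Z^{N+2}/(1-A_-^t)Z^{N+2}. -/
/-- The subgroup `(1 - Bᵗ)ℤ^k` of `ℤ^k`, i.e. the image of `x ↦ (1 - Bᵗ)x`. -/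
def bfSubgroup {k : ℕ} (B : Matrix (Fin k) (Fin k) ℤ) : Submodule ℤ (Fin k → ℤ) :=
  LinearMap.range (Matrix.mulVecLin (1 - B.transpose))

/-- The map `ξ : ℤ^N → ℤ^{N+2}`, `(x_1,…,x_N) ↦ (x_1,…,x_N,0,0)` (`N = n+1`). -/
def xiMap {n : ℕ} (x : Fin (n+1) → ℤ) : Fin (n+3) → ℤ :=
  fun j => if hj : (j : ℕ) < n + 1 then x ⟨j, hj⟩ else 0

/-!
Write a vector of `ℤ^{N+2}` as `(y, a, b)` with `y ∈ ℤ^N`. Reading off the columns of `A₋` gives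
`(1 - A₋ᵗ)(y, a, b) = ((1 - Aᵗ)y - a·e_N, -y_N - b, -a)`. Hence `(x, 0, 0)` lies in
`(1 - A₋ᵗ)ℤ^{N+2}` iff `a = 0`, `b = -y_N` and `(1 - Aᵗ)y = x` for some `y, a, b`, i.e. iff
`x ∈ (1 - Aᵗ)ℤ^N`. So `ξ` pulls `(1 - A₋ᵗ)ℤ^{N+2}` back to exactly `(1 - Aᵗ)ℤ^N`, which makes the
induced map on cokernels both well defined and injective.
-/
open Matrix

theorem Matrix.one_sub_transpose_mulVec {m R : Type*} [Fintype m] [DecidableEq m] [CommRing R]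
    (B : Matrix m m R) (y : m → R) : (1 - Bᵀ) *ᵥ y = y - y ᵥ* B := by
  rw [Matrix.sub_mulVec, Matrix.one_mulVec, Matrix.mulVec_transpose]

theorem mem_bfSubgroup_iff {k : ℕ} (B : Matrix (Fin k) (Fin k) ℤ) (y : Fin k → ℤ) :
    y ∈ bfSubgroup B ↔ ∃ z, z - z ᵥ* B = y := by
  simp only [bfSubgroup, LinearMap.mem_range, Matrix.mulVecLin_apply,
    Matrix.one_sub_transpose_mulVec]

section CuntzSplice

variable {n : ℕ}

theorem xiMap_eq_snoc (x : Fin (n+1) → ℤ) :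
    xiMap x = (Fin.snoc (Fin.snoc x 0) 0 : Fin (n+3) → ℤ) := by
  funext k
  refine Fin.lastCases ?_ (fun k => Fin.lastCases ?_ (fun i => ?_) k) k
  · simp [xiMap]
  · simp [xiMap]
  · simp [xiMap, not_lt_of_ge i.is_le]

variable (A : Matrix (Fin (n+1)) (Fin (n+1)) ℤ)

theorem snoc_snoc_sub_vecMul_cuntzSplice (y : Fin (n+1) → ℤ) (a b : ℤ) :
    let z : Fin (n+3) → ℤ := Fin.snoc (Fin.snoc y a) b
    z - z ᵥ* cuntzSplice A =
      Fin.snoc (Fin.snoc (y - y ᵥ* A - Pi.single (Fin.last n) a) (-y (Fin.last n) - b)) (-a) := by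
  intro z
  have hlast (x : Fin (n+1)) : (x : ℕ) = n ↔ x = Fin.last n := by simp [Fin.ext_iff]
  funext k
  refine Fin.lastCases ?_ (fun k => Fin.lastCases ?_ (fun i => ?_) k) k
  all_goals
    simp only [z, Pi.sub_apply, vecMul, dotProduct]
    rw [Fin.sum_univ_castSucc, Fin.sum_univ_castSucc]
  · simp [cuntzSplice, Fin.is_le]
  · simp [cuntzSplice, Fin.is_le, hlast]
    ring
  · have hi : ¬ ((i : ℕ) = n + 1 ∨ (i : ℕ) = n + 2) := by omega
    simp [cuntzSplice, Fin.is_le, hlast, hi, Pi.single_apply, vecMul, dotProduct, sub_sub]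

theorem xiMap_mem_bfSubgroup_cuntzSplice_iff (x : Fin (n+1) → ℤ) :
    xiMap x ∈ bfSubgroup (cuntzSplice A) ↔ x ∈ bfSubgroup A := by
  simp only [mem_bfSubgroup_iff, xiMap_eq_snoc]
  constructor
  · rintro ⟨z, hz⟩
    rw [← Fin.snoc_init_self z, ← Fin.snoc_init_self (Fin.init z),
      snoc_snoc_sub_vecMul_cuntzSplice] at hz
    obtain ⟨hz, ha⟩ := Fin.snoc_inj.mp hz
    obtain ⟨hy, -⟩ := Fin.snoc_inj.mp hz
    exact ⟨_, by simpa [neg_eq_zero.mp ha] using hy⟩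
  · rintro ⟨y, rfl⟩
    exact ⟨Fin.snoc (Fin.snoc y 0) (-y (Fin.last n)), by
      rw [snoc_snoc_sub_vecMul_cuntzSplice]; simp⟩

def xiLinearMap : (Fin (n+1) → ℤ) →ₗ[ℤ] (Fin (n+3) → ℤ) where
  toFun := xiMap
  map_add' x y := by
    funext j
    by_cases hj : (j : ℕ) < n + 1 <;> simp [xiMap, hj]
  map_smul' c x := by
    funext j
    by_cases hj : (j : ℕ) < n + 1 <;> simp [xiMap, hj]

theorem comap_xiLinearMap_bfSubgroup_cuntzSplice :
    (bfSubgroup (cuntzSplice A)).comap xiLinearMap = bfSubgroup A :=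
  SetLike.ext (xiMap_mem_bfSubgroup_cuntzSplice_iff A)

end CuntzSplice

/-- The map `ξ_A : x ↦ (x,0,0)` induces an injective group homomorphism from
`G(A) = ℤ^N/(1-Aᵗ)ℤ^N` to `G(A₋) = ℤ^{N+2}/(1-A₋ᵗ)ℤ^{N+2}`. -/
theorem xiMap_induces_injective_hom {n : ℕ} (A : Matrix (Fin (n+1)) (Fin (n+1)) ℤ) :
    ∃ f : ((Fin (n+1) → ℤ) ⧸ bfSubgroup A) →+
        ((Fin (n+3) → ℤ) ⧸ bfSubgroup (cuntzSplice A)),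
      Function.Injective f ∧
      ∀ x : Fin (n+1) → ℤ,
        f (Submodule.Quotient.mk x) = Submodule.Quotient.mk (xiMap x) := by
  have hcomap := comap_xiLinearMap_bfSubgroup_cuntzSplice A
  let f := (bfSubgroup A).mapQ (bfSubgroup (cuntzSplice A)) xiLinearMap hcomap.ge
  have hker : LinearMap.ker f = ⊥ := by
    rw [Submodule.ker_mapQ, hcomap, Submodule.mkQ_map_self]
  exact ⟨f.toAddMonoidHom, LinearMap.ker_eq_bot.mp hker, fun x => rfl⟩
end

section
/- Let A be an N×N integer matrix and A_- its Cuntz splice. The induced homomorphism from G(A) = Z^N/(1-A^t)Z^N to G(A_-) = Z^{N+2}/(1-A_-^t)Z^{N+2} given by x ↦ (x,0,0) is surjective: every class in G(A_-) is represented by a vector of the form (x_1,...,x_N,0,0). -/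
/-! In `G(B) = ℤ^k / (1 - Bᵗ)ℤ^k` the basis vector `e_j` is congruent to the `j`-th row
of `B`. For the Cuntz splice, rows `N+2` and `N+1` give the relations `e_{N+1} ≡ 0` and
`e_N + e_{N+2} ≡ 0`, and `x - ξ(x_1, …, x_{N-1}, x_N - x_{N+2})` is exactly
`x_{N+2} (e_N + e_{N+2}) + x_{N+1} e_{N+1}`. In `Fin (m+3)` the indices `N, N+1, N+2` are
`(Fin.last m).castSucc.castSucc`, `(Fin.last (m+1)).castSucc` and `Fin.last (m+2)`. -/

lemma single_sub_row_mem_bfSubgroup {k : ℕ} (B : Matrix (Fin k) (Fin k) ℤ) (j : Fin k) :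
    Pi.single j 1 - B j ∈ bfSubgroup B :=
  ⟨Pi.single j 1, by
    ext i
    simp [Pi.single_apply, eq_comm]⟩

section CuntzSplice

variable {m : ℕ} (B : Matrix (Fin (m+1)) (Fin (m+1)) ℤ)

lemma cuntzSplice_row_castSucc_last :
    cuntzSplice B (Fin.last (m+1)).castSucc =
      Pi.single (Fin.last m).castSucc.castSucc 1 + Pi.single (Fin.last (m+1)).castSucc 1 +
        Pi.single (Fin.last (m+2)) 1 := by
  ext ⟨j, hj⟩
  simp only [cuntzSplice, Matrix.of_apply, Pi.add_apply, Pi.single_apply, Fin.ext_iff,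
    Fin.val_castSucc, Fin.val_last]
  grind

lemma cuntzSplice_row_last :
    cuntzSplice B (Fin.last (m+2)) =
      Pi.single (Fin.last (m+1)).castSucc 1 + Pi.single (Fin.last (m+2)) 1 := by
  ext ⟨j, hj⟩
  simp only [cuntzSplice, Matrix.of_apply, Pi.add_apply, Pi.single_apply, Fin.ext_iff,
    Fin.val_castSucc, Fin.val_last]
  grind

lemma single_castSucc_last_mem_bfSubgroup_cuntzSplice :
    Pi.single (Fin.last (m+1)).castSucc 1 ∈ bfSubgroup (cuntzSplice B) := by
  have h := single_sub_row_mem_bfSubgroup (cuntzSplice B) (Fin.last (m+2))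
  rw [cuntzSplice_row_last, sub_add_cancel_right] at h
  exact neg_mem_iff.mp h

lemma single_add_single_last_mem_bfSubgroup_cuntzSplice :
    Pi.single (Fin.last m).castSucc.castSucc 1 + Pi.single (Fin.last (m+2)) 1 ∈
      bfSubgroup (cuntzSplice B) := by
  have h := single_sub_row_mem_bfSubgroup (cuntzSplice B) (Fin.last (m+1)).castSucc
  rw [cuntzSplice_row_castSucc_last] at h
  convert neg_mem h using 1
  abel

end CuntzSplice

/-- Surjectivity of the induced map `G(A) → G(A₋)`: every class in `G(A₋)` is
represented by a vector of the form `(x_1,…,x_N,0,0)`; concretely, for every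
`x ∈ ℤ^{N+2}` the vector `x - (x_1,…,x_{N-1}, x_N - x_{N+2}, 0, 0)` lies in
`(1 - A₋ᵗ)ℤ^{N+2}`. -/
theorem xiMap_induced_surjective {n : ℕ} (A : Matrix (Fin (n+1)) (Fin (n+1)) ℤ)
    (x : Fin (n+3) → ℤ) :
    x - xiMap (fun i : Fin (n+1) =>
        if (i : ℕ) = n then x ⟨n, by omega⟩ - x ⟨n+2, by omega⟩
        else x ⟨i, by omega⟩)
      ∈ bfSubgroup (cuntzSplice A) := by
  have hN := single_add_single_last_mem_bfSubgroup_cuntzSplice A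
  have hN₁ := single_castSucc_last_mem_bfSubgroup_cuntzSplice A
  convert add_mem (Submodule.smul_mem _ (x ⟨n+2, by omega⟩) hN)
    (Submodule.smul_mem _ (x ⟨n+1, by omega⟩) hN₁) using 1
  ext ⟨i, hi⟩
  simp only [xiMap, Pi.sub_apply, Pi.add_apply, Pi.smul_apply, Pi.single_apply, Fin.ext_iff,
    Fin.val_castSucc, Fin.val_last, smul_eq_mul]
  grind
end

section
/- Let A be an N×N integer matrix. The map η_A : Z^{N+1} → Z^N defined by η_A(x_1,...,x_{N-1},x_N,x_{N+1}) = (x_1,...,x_{N-1}, x_N + x_{N+1}) induces a group isomorphism from G(A°) = Z^{N+1}/(1-(A°)^t)Z^{N+1} onto G(A) = Z^N/(1-A^t)Z^N, sending the class of (1,...,1,0) (first N entries 1, last entry 0) to the class of the all-ones vector (1,...,1) in Z^N. -/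
/-- The map `η_A(x_1,…,x_{N+1}) = (x_1,…,x_{N-1}, x_N + x_{N+1})`. -/
def etaMap {n : ℕ} (x : Fin (n+2) → ℤ) : Fin (n+1) → ℤ :=
  fun i => if (i : ℕ) = n then x ⟨n, by omega⟩ + x ⟨n+1, by omega⟩ else x ⟨i, by omega⟩

open Matrix

/-!
Write `σ : ℤ^{N+1} → ℤ^N` for the map deleting the `N`-th coordinate. Deleting row `N` and
column `N+1` of `A°` leaves `A`, row `N` is `e_{N+1}`, and column `N+1` is otherwise zero; so
`A°ᵗ x = (Aᵗ σ x, x_N)`, whence `η ∘ (1 - A°ᵗ) = (1 - Aᵗ) ∘ σ`. As `σ` is onto, `η` maps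
`(1 - A°ᵗ)ℤ^{N+1}` onto `(1 - Aᵗ)ℤ^N`; and `ker η = ℤ (e_N - e_{N+1}) = ℤ (1 - A°ᵗ) e_N` lies in
`(1 - A°ᵗ)ℤ^{N+1}`. Hence `(1 - A°ᵗ)ℤ^{N+1}` is the full preimage of `(1 - Aᵗ)ℤ^N` under the surjection `η`, and `η`
descends to an isomorphism of the quotients.

With `0`-based indices, coordinate `N` is `(Fin.last n).castSucc` and coordinate `N+1` is
`Fin.last (n+1)`.
-/

namespace Submodule

variable {R M M' N N' : Type*} [Ring R] [AddCommGroup M] [Module R M] [AddCommGroup M']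
  [Module R M'] [AddCommGroup N] [Module R N] [AddCommGroup N'] [Module R N']

theorem mapQ_bijective_of_comap_eq {η : M' →ₗ[R] N'} (hη : Function.Surjective η)
    {p : Submodule R M'} {q : Submodule R N'} (hpq : q.comap η = p) :
    Function.Bijective (p.mapQ q η hpq.ge) := by
  constructor
  · rw [← LinearMap.ker_eq_bot, ker_mapQ, hpq, mkQ_map_self]
  · rw [← LinearMap.range_eq_top, range_mapQ, LinearMap.range_eq_top.mpr hη, map_top, range_mkQ]

theorem comap_range_eq_range {f : M →ₗ[R] M'} {g : N →ₗ[R] N'} {η : M' →ₗ[R] N'} {σ : M → N}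
    (hσ : Function.Surjective σ) (hcomm : ∀ m, η (f m) = g (σ m))
    (hker : LinearMap.ker η ≤ LinearMap.range f) :
    (LinearMap.range g).comap η = LinearMap.range f := by
  rw [← comap_map_eq_self hker]
  congr 1
  ext y
  constructor
  · rintro ⟨z, rfl⟩
    obtain ⟨m, rfl⟩ := hσ z
    exact ⟨f m, LinearMap.mem_range_self f m, hcomm m⟩
  · rintro ⟨_, ⟨m, rfl⟩, rfl⟩
    exact ⟨σ m, (hcomm m).symm⟩

end Submodule

section Coordinates

variable {n : ℕ}

theorem val_succAbove_castSucc_last (i : Fin (n+1)) :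
    ((Fin.last n).castSucc.succAbove i : ℕ) = if (i : ℕ) < n then (i : ℕ) else n + 1 := by
  simp only [Fin.succAbove, Fin.lt_def, Fin.val_castSucc, Fin.val_last]
  split_ifs <;> simp only [Fin.val_castSucc, Fin.val_succ]
  omega

theorem removeNth_castSucc_last_castSucc {α : Type*} (x : Fin (n+2) → α) (i : Fin n) :
    Fin.removeNth (Fin.last n).castSucc x i.castSucc = x i.castSucc.castSucc := by
  rw [Fin.removeNth_apply, Fin.succAbove_castSucc_of_lt _ _ (Fin.castSucc_lt_last i)]

theorem removeNth_castSucc_last_last {α : Type*} (x : Fin (n+2) → α) :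
    Fin.removeNth (Fin.last n).castSucc x (Fin.last n) = x (Fin.last (n+1)) := by
  rw [Fin.removeNth_apply, Fin.succAbove_castSucc_self, Fin.succ_last]

theorem etaMap_castSucc (x : Fin (n+2) → ℤ) (i : Fin n) :
    etaMap x i.castSucc = x i.castSucc.castSucc := by
  simp only [etaMap, Fin.val_castSucc, i.isLt.ne, if_false]
  rfl

theorem etaMap_last (x : Fin (n+2) → ℤ) :
    etaMap x (Fin.last n) = x (Fin.last n).castSucc + x (Fin.last (n+1)) := by
  simp only [etaMap, Fin.val_last, if_true]
  rfl

theorem etaMap_snoc_zero (v : Fin (n+1) → ℤ) : etaMap (Fin.snoc v 0) = v := by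
  ext i
  induction i using Fin.lastCases with
  | last => simp [etaMap_last]
  | cast i => simp [etaMap_castSucc]

end Coordinates

def etaLin (n : ℕ) : (Fin (n+2) → ℤ) →ₗ[ℤ] (Fin (n+1) → ℤ) where
  toFun := etaMap
  map_add' x y := by
    ext i
    simp only [etaMap, Pi.add_apply]
    split <;> ring
  map_smul' c x := by
    ext i
    simp only [etaMap, Pi.smul_apply, smul_eq_mul, RingHom.id_apply]
    split <;> ring

namespace psExpansion

variable {n : ℕ} (A : Matrix (Fin (n+1)) (Fin (n+1)) ℤ)

theorem apply_castSucc_last (j : Fin (n+2)) :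
    psExpansion A (Fin.last n).castSucc j = (Pi.single (Fin.last (n+1)) 1 : Fin (n+2) → ℤ) j := by
  simp [psExpansion, Pi.single_apply, Fin.ext_iff]

theorem apply_succAbove_castSucc (i j : Fin (n+1)) :
    psExpansion A ((Fin.last n).castSucc.succAbove i) j.castSucc = A i j := by
  simp only [psExpansion, of_apply, val_succAbove_castSucc_last, Fin.val_castSucc]
  split_ifs <;> first | omega | (congr 1 <;> ext <;> simp_all <;> omega)

theorem apply_succAbove_last (i : Fin (n+1)) :
    psExpansion A ((Fin.last n).castSucc.succAbove i) (Fin.last (n+1)) = 0 := by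
  simp only [psExpansion, of_apply, val_succAbove_castSucc_last, Fin.val_last]
  split_ifs <;> omega

theorem vecMul_castSucc (x : Fin (n+2) → ℤ) (j : Fin (n+1)) :
    (x ᵥ* psExpansion A) j.castSucc = (Fin.removeNth (Fin.last n).castSucc x ᵥ* A) j := by
  simp only [vecMul, dotProduct, Fin.sum_univ_succAbove _ (Fin.last n).castSucc,
    apply_castSucc_last, apply_succAbove_castSucc, Fin.removeNth_apply]
  simp [j.castSucc_ne_last]

theorem vecMul_last (x : Fin (n+2) → ℤ) :
    (x ᵥ* psExpansion A) (Fin.last (n+1)) = x (Fin.last n).castSucc := by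
  simp only [vecMul, dotProduct, Fin.sum_univ_succAbove _ (Fin.last n).castSucc,
    apply_castSucc_last, apply_succAbove_last]
  simp

theorem one_sub_transpose_mulVec_single (c : ℤ) :
    (1 - (psExpansion A)ᵀ) *ᵥ Pi.single (Fin.last n).castSucc c
      = Pi.single (Fin.last n).castSucc c - Pi.single (Fin.last (n+1)) c := by
  rw [sub_mulVec, one_mulVec, mulVec_transpose, single_vecMul]
  ext j
  simp [apply_castSucc_last, Pi.single_apply]

theorem etaMap_one_sub_transpose_mulVec (w : Fin (n+2) → ℤ) :
    etaMap ((1 - (psExpansion A)ᵀ) *ᵥ w)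
      = (1 - Aᵀ) *ᵥ Fin.removeNth (Fin.last n).castSucc w := by
  simp only [sub_mulVec, one_mulVec, mulVec_transpose]
  ext i
  induction i using Fin.lastCases with
  | last =>
    simp only [etaMap_last, Pi.sub_apply, vecMul_castSucc, vecMul_last,
      removeNth_castSucc_last_last]
    ring
  | cast i =>
    simp only [etaMap_castSucc, Pi.sub_apply, vecMul_castSucc, removeNth_castSucc_last_castSucc]

theorem ker_etaLin_le : LinearMap.ker (etaLin n) ≤ bfSubgroup (psExpansion A) := by
  intro x hx
  replace hx : etaMap x = 0 := hx
  refine ⟨Pi.single (Fin.last n).castSucc (x (Fin.last n).castSucc), ?_⟩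
  rw [mulVecLin_apply, one_sub_transpose_mulVec_single]
  ext j
  induction j using Fin.lastCases with
  | last =>
    have hlast := congrFun hx (Fin.last n)
    rw [etaMap_last, Pi.zero_apply] at hlast
    simp only [Pi.sub_apply, Pi.single_apply, (Fin.last n).castSucc_ne_last.symm, if_true, if_false]
    linarith
  | cast j =>
    induction j using Fin.lastCases with
    | last => simp
    | cast i =>
      have hi := congrFun hx i.castSucc
      rw [etaMap_castSucc, Pi.zero_apply] at hi
      simp [hi]

end psExpansion

theorem comap_etaLin_bfSubgroup {n : ℕ} (A : Matrix (Fin (n+1)) (Fin (n+1)) ℤ) :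
    (bfSubgroup A).comap (etaLin n) = bfSubgroup (psExpansion A) :=
  Submodule.comap_range_eq_range (σ := Fin.removeNth (Fin.last n).castSucc)
    (fun z => ⟨Fin.insertNth _ 0 z, Fin.removeNth_insertNth _ _ _⟩)
    (psExpansion.etaMap_one_sub_transpose_mulVec A) (psExpansion.ker_etaLin_le A)

/-- `η_A` induces a group isomorphism `G(A°) ≅ G(A)` sending the class of
`(1,…,1,0)` (first `N` entries `1`, last entry `0`) to the class of the all-ones
vector `(1,…,1)`. -/
theorem etaMap_induces_isomorphism {n : ℕ} (A : Matrix (Fin (n+1)) (Fin (n+1)) ℤ) :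
    ∃ e : ((Fin (n+2) → ℤ) ⧸ bfSubgroup (psExpansion A)) ≃+
        ((Fin (n+1) → ℤ) ⧸ bfSubgroup A),
      (∀ x : Fin (n+2) → ℤ,
        e (Submodule.Quotient.mk x) = Submodule.Quotient.mk (etaMap x)) ∧
      e (Submodule.Quotient.mk (fun i : Fin (n+2) => if (i : ℕ) = n + 1 then 0 else 1))
        = Submodule.Quotient.mk (fun _ : Fin (n+1) => (1 : ℤ)) := by
  have hbij := Submodule.mapQ_bijective_of_comap_eq (η := etaLin n)
    (fun v => ⟨Fin.snoc v 0, etaMap_snoc_zero v⟩) (comap_etaLin_bfSubgroup A)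
  have hones : (fun i : Fin (n+2) => if (i : ℕ) = n + 1 then (0 : ℤ) else 1) =
      Fin.snoc (1 : Fin (n+1) → ℤ) 0 := by
    ext i
    induction i using Fin.lastCases with
    | last => simp
    | cast i => simp [i.isLt.ne]
  refine ⟨(LinearEquiv.ofBijective _ hbij).toAddEquiv, fun x => rfl, ?_⟩
  rw [hones]
  exact congrArg Submodule.Quotient.mk (etaMap_snoc_zero 1)
end

section
/- Let A be an N×N integer matrix. Let Ā be the (N+3)×(N+3) matrix of equation (1) (Parry–Sullivan expansion followed by Cuntz splice) and let Ã be the (N+3)×(N+3) matrix identical to Ā except that its (N+2,N+2)-entry is 0 instead of 1. Then det(1-Ā) = det(1-Ã). -/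
/-- The matrix `Ã`: identical to `Ā = (A°)₋` except that its `(N+2,N+2)`-entry
(1-based; 0-based index `(n+2,n+2)`) is `0` instead of `1`. -/
def tildeMatrix {n : ℕ} (A : Matrix (Fin (n+1)) (Fin (n+1)) ℤ) :
    Matrix (Fin (n+4)) (Fin (n+4)) ℤ :=
  Matrix.of fun i j =>
    if (i : ℕ) = n + 2 ∧ (j : ℕ) = n + 2 then 0 else cuntzSplice (psExpansion A) i j

/-! `1 - Ã` is `1 - Ā` plus the matrix unit at `(N+2, N+2)`. By linearity of the determinant in
row `N+2`, the two determinants differ by the determinant of `1 - Ā` with row `N+2` replaced by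
`e_{N+2}`, and this vanishes because the last row of `1 - Ā` is `-e_{N+2}`. -/

namespace Matrix

variable {n R : Type*} [Fintype n] [DecidableEq n] [CommRing R]

theorem det_updateRow_single_eq_zero_of_row_eq_single (M : Matrix n n R) {i j k : n}
    (hij : i ≠ j) (a b : R) (hj : M j = Pi.single k a) :
    (M.updateRow i (Pi.single k b)).det = 0 := by
  have hsingle : ∀ c : R, Pi.single k c = c • (Pi.single k 1 : n → R) := fun c => by
    rw [← Pi.single_smul, smul_eq_mul, mul_one]
  rw [hsingle b, det_updateRow_smul, ← det_updateRow_add_smul_self _ hij.symm (-a)]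
  refine mul_eq_zero_of_right _ (det_eq_zero_of_row_eq_zero j fun l => ?_)
  simp [updateRow_ne hij.symm, hj, hsingle a]

theorem det_add_single_of_row_eq_single (M : Matrix n n R) {i j k : n}
    (hij : i ≠ j) (a b : R) (hj : M j = Pi.single k a) :
    (M + single i k b).det = M.det := by
  have hupd : M + single i k b = M.updateRow i (M i + Pi.single k b) := by
    ext r c
    by_cases hr : r = i
    · subst hr
      simp [single_apply, Pi.single_apply, eq_comm]
    · simp [hr, Ne.symm hr]
  rw [hupd, det_updateRow_add, updateRow_eq_self,
    det_updateRow_single_eq_zero_of_row_eq_single M hij a b hj, add_zero]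

end Matrix

theorem one_sub_cuntzSplice_last {m : ℕ} (B : Matrix (Fin (m+1)) (Fin (m+1)) ℤ) :
    (1 - cuntzSplice B) (Fin.last (m+2)) = Pi.single ⟨m+1, by omega⟩ (-1) := by
  ext j
  simp only [cuntzSplice, Matrix.sub_apply, Matrix.one_apply, Matrix.of_apply, Pi.single_apply,
    Fin.ext_iff, Fin.val_last]
  split_ifs <;> omega

theorem tildeMatrix_eq_sub_single {n : ℕ} (A : Matrix (Fin (n+1)) (Fin (n+1)) ℤ) :
    tildeMatrix A =
      cuntzSplice (psExpansion A) - Matrix.single ⟨n+2, by omega⟩ ⟨n+2, by omega⟩ 1 := by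
  ext ⟨i, hi⟩ ⟨j, hj⟩
  by_cases h : i = n + 2 ∧ j = n + 2
  · obtain ⟨rfl, rfl⟩ := h
    simp [tildeMatrix, cuntzSplice]
  · have h' : ¬(n + 2 = i ∧ n + 2 = j) := by omega
    simp [tildeMatrix, h, h']

/-- `det(1 - Ā) = det(1 - Ã)`. -/
theorem det_bar_eq_det_tilde {n : ℕ} (A : Matrix (Fin (n+1)) (Fin (n+1)) ℤ) :
    ((1 : Matrix (Fin (n+4)) (Fin (n+4)) ℤ) - cuntzSplice (psExpansion A)).det
      = ((1 : Matrix (Fin (n+4)) (Fin (n+4)) ℤ) - tildeMatrix A).det := by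
  rw [tildeMatrix_eq_sub_single, sub_sub_eq_add_sub, add_sub_right_comm]
  exact (Matrix.det_add_single_of_row_eq_single _ (j := Fin.last _) (by simp [Fin.ext_iff])
    (-1) 1 (one_sub_cuntzSplice_last _)).symm
end
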